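/- arXiv:1011.3482 — 3 statements merged into one kernel-verified Lean document; each statement's English description precedes it below -/
import Mathlib

section
/- Suppose the degree-1 geometric graph G₁ is connected, and let D be its hop diameter, i.e., the maximum over ordered pairs (i,j) of the graph distance between i and j in G₁. Then the iterative range algorithm converges to G₁ in at most D iterations: for every k ≥ D and every node i, r k i = r₁(V), and consequently the graph with edge set {(i,j) : i ≠ j and d i j ≤ r k i} equals G₁. -/
open Metric

/-- The geometric graph of radius `r` on points `V`. -/
def geomGraph (n : ℕ) (V : Fin n → EuclideanSpace ℝ (Fin 2)) (r : ℝ) :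
    SimpleGraph (Fin n) where
  Adj i j := i ≠ j ∧ dist (V i) (V j) ≤ r
  symm := ⟨fun i j ⟨h1, h2⟩ => ⟨h1.symm, by rwa [dist_comm]⟩⟩
  loopless := ⟨fun i ⟨h, _⟩ => h rfl⟩

/-- The degree-1 radius `r₁(V) = max_i min_{j ≠ i} ‖V i − V j‖`. -/
noncomputable def degOneRadius (n : ℕ) (V : Fin n → EuclideanSpace ℝ (Fin 2)) : ℝ :=
  ⨆ i : Fin n, ⨅ j : {j : Fin n // j ≠ i}, dist (V i) (V j.1)

/-- The iterative range algorithm: `r 0 i = min_{j ≠ i} d i j`, and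
`r (k+1) i = max_{j ∈ S k i} r k j` where `S k i = {j : d j i ≤ r k j}`. -/
noncomputable def rIter (n : ℕ) (V : Fin n → EuclideanSpace ℝ (Fin 2)) :
    ℕ → Fin n → ℝ
  | 0 => fun i => ⨅ j : {j : Fin n // j ≠ i}, dist (V i) (V j.1)
  | k + 1 => fun i =>
      ⨆ j : {j : Fin n // dist (V j) (V i) ≤ rIter n V k j}, rIter n V k j.1

section Aux

variable (n : ℕ) (V : Fin n → EuclideanSpace ℝ (Fin 2))

lemma aux_nontrivial (hn : 2 ≤ n) : Nontrivial (Fin n) :=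
  Fin.nontrivial_iff_two_le.mpr hn

lemma aux_ne_nonempty (hn : 2 ≤ n) (i : Fin n) : Nonempty {j : Fin n // j ≠ i} := by
  haveI := aux_nontrivial n hn
  obtain ⟨j, hj⟩ := exists_ne i
  exact ⟨⟨j, hj⟩⟩

lemma rIter_succ_def (k : ℕ) (i : Fin n) :
    rIter n V (k+1) i =
      ⨆ j : {j : Fin n // dist (V j) (V i) ≤ rIter n V k j}, rIter n V k j.1 := rfl

lemma rIter_nonneg (hn : 2 ≤ n) : ∀ k i, 0 ≤ rIter n V k i := by
  intro k
  induction k with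
  | zero =>
    intro i
    haveI := aux_ne_nonempty n hn i
    exact le_ciInf fun j => dist_nonneg
  | succ k ih =>
    intro i
    have hi : dist (V i) (V i) ≤ rIter n V k i := by
      simpa using ih i
    rw [rIter_succ_def]
    calc (0:ℝ) ≤ rIter n V k i := ih i
      _ ≤ _ := le_ciSup
          (f := fun j : {j : Fin n // dist (V j) (V i) ≤ rIter n V k j} => rIter n V k j.1)
          (Set.Finite.bddAbove (Set.finite_range _)) ⟨i, hi⟩

lemma rIter_mono_succ (hn : 2 ≤ n) (k : ℕ) (i : Fin n) :
    rIter n V k i ≤ rIter n V (k+1) i := by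
  rw [rIter_succ_def]
  have hi : dist (V i) (V i) ≤ rIter n V k i := by
    simpa using rIter_nonneg n V hn k i
  exact le_ciSup
    (f := fun j : {j : Fin n // dist (V j) (V i) ≤ rIter n V k j} => rIter n V k j.1)
    (Set.Finite.bddAbove (Set.finite_range _)) ⟨i, hi⟩

lemma rIter_le_degOneRadius (hn : 2 ≤ n) : ∀ k i, rIter n V k i ≤ degOneRadius n V := by
  haveI : Nonempty (Fin n) := ⟨⟨0, by omega⟩⟩
  intro k
  induction k with
  | zero =>
    intro i
    rw [degOneRadius]
    exact le_ciSup
      (f := fun i : Fin n => ⨅ j : {j : Fin n // j ≠ i}, dist (V i) (V j.1))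
      (Set.Finite.bddAbove (Set.finite_range _)) i
  | succ k ih =>
    intro i
    have hi : dist (V i) (V i) ≤ rIter n V k i := by
      simpa using rIter_nonneg n V hn k i
    haveI : Nonempty {j : Fin n // dist (V j) (V i) ≤ rIter n V k j} := ⟨⟨i, hi⟩⟩
    rw [rIter_succ_def]
    exact ciSup_le fun j => ih j.1

lemma rIter_eq_of_walk (hn : 2 ≤ n) (istar : Fin n)
    (hstar : rIter n V 0 istar = degOneRadius n V) :
    ∀ k (i : Fin n) (p : (geomGraph n V (degOneRadius n V)).Walk i istar),
      p.length ≤ k → rIter n V k i = degOneRadius n V := by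
  intro k
  induction k with
  | zero =>
    intro i p hp
    cases p with
    | nil => exact hstar
    | cons h q => simp at hp
  | succ k ih =>
    intro i p hp
    refine le_antisymm (rIter_le_degOneRadius n V hn _ i) ?_
    cases p with
    | nil =>
      have h1 : rIter n V k istar = degOneRadius n V := ih istar .nil (by simp)
      calc degOneRadius n V = rIter n V k istar := h1.symm
        _ ≤ _ := rIter_mono_succ n V hn k istar
    | @cons _ j _ h q =>
      have hj : rIter n V k j = degOneRadius n V :=
        ih j q (Nat.le_of_succ_le_succ hp)
      have hd : dist (V j) (V i) ≤ rIter n V k j := by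
        rw [hj, dist_comm]; exact h.2
      rw [rIter_succ_def]
      calc degOneRadius n V = rIter n V k j := hj.symm
        _ ≤ _ := le_ciSup
            (f := fun j' : {j' : Fin n // dist (V j') (V i) ≤ rIter n V k j'} => rIter n V k j'.1)
            (Set.Finite.bddAbove (Set.finite_range _)) ⟨j, hd⟩

end Aux

theorem rIter_converges_to_degOneGraph (n : ℕ) (hn : 2 ≤ n)
    (V : Fin n → EuclideanSpace ℝ (Fin 2))
    (hconn : (geomGraph n V (degOneRadius n V)).Connected)
    (D : ℕ)
    (hD : D = ⨆ i : Fin n, ⨆ j : Fin n, (geomGraph n V (degOneRadius n V)).dist i j) :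
    ∀ k, D ≤ k →
      (∀ i, rIter n V k i = degOneRadius n V) ∧
      (∀ i j, (i ≠ j ∧ dist (V i) (V j) ≤ rIter n V k i) ↔
        (geomGraph n V (degOneRadius n V)).Adj i j) := by
  intro k hk
  haveI : Nonempty (Fin n) := ⟨⟨0, by omega⟩⟩
  obtain ⟨istar, hstar⟩ := exists_eq_ciSup_of_finite
    (f := fun i => ⨅ j : {j : Fin n // j ≠ i}, dist (V i) (V j.1))
  have hstar' : rIter n V 0 istar = degOneRadius n V := hstar
  set G := geomGraph n V (degOneRadius n V) with hG
  have hall : ∀ i, rIter n V k i = degOneRadius n V := by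
    intro i
    obtain ⟨p, hp⟩ := (hconn.preconnected i istar).exists_walk_length_eq_dist
    have hdist : G.dist i istar ≤ D := by
      rw [hD]
      calc G.dist i istar ≤ ⨆ j, G.dist i j :=
            le_ciSup (Set.Finite.bddAbove (Set.finite_range _)) istar
        _ ≤ ⨆ i, ⨆ j, G.dist i j :=
            le_ciSup (f := fun i : Fin n => ⨆ j, G.dist i j)
              (Set.Finite.bddAbove (Set.finite_range _)) i
    exact rIter_eq_of_walk n V hn istar hstar' k i p (by omega)
  refine ⟨hall, fun i j => ?_⟩
  rw [hall i]
  exact Iff.rfl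
end

section
/- Let f : ℝ → ℝ be strictly monotone increasing with f(0) ≤ f(x) for x ≥ 0, and run the iterative range algorithm on the transformed weights w i j = f(d i j) in place of the distances: ρ 0 i = min_{j ≠ i} w i j and, with S k i = {j : w j i ≤ ρ k j}, ρ (k+1) i = max_{j ∈ S k i} ρ k j. If the degree-1 geometric graph G₁ is connected with hop diameter D, then for every k ≥ D and every node i, ρ k i = f(r₁(V)), and the graph with edge set {(i,j) : i ≠ j and w i j ≤ ρ k i} equals G₁. -/
open Metric

theorem rIter_transformed_converges (n : ℕ) (hn : 2 ≤ n)
    (V : Fin n → EuclideanSpace ℝ (Fin 2))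
    (f : ℝ → ℝ) (hf : StrictMono f) (hf0 : ∀ x : ℝ, 0 ≤ x → f 0 ≤ f x)
    (ρ : ℕ → Fin n → ℝ)
    (h0 : ∀ i, ρ 0 i = ⨅ j : {j : Fin n // j ≠ i}, f (dist (V i) (V j.1)))
    (hstep : ∀ k i, ρ (k + 1) i =
      ⨆ j : {j : Fin n // f (dist (V j) (V i)) ≤ ρ k j}, ρ k j.1)
    (hconn : (geomGraph n V (degOneRadius n V)).Connected)
    (D : ℕ)
    (hD : D = ⨆ i : Fin n, ⨆ j : Fin n, (geomGraph n V (degOneRadius n V)).dist i j) :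
    ∀ k, D ≤ k →
      (∀ i, ρ k i = f (degOneRadius n V)) ∧
      (∀ i j, (i ≠ j ∧ f (dist (V i) (V j)) ≤ ρ k i) ↔
        (geomGraph n V (degOneRadius n V)).Adj i j) := by
  haveI : Nonempty (Fin n) := ⟨⟨0, by omega⟩⟩
  set r := degOneRadius n V with hrdef
  set G := geomGraph n V r with hGdef
  have hne : ∀ i : Fin n, Nonempty {j : Fin n // j ≠ i} := by
    intro i
    obtain ⟨j, hj⟩ := Fintype.exists_ne_of_one_lt_card (by simpa using (show 1 < n by omega)) i
    exact ⟨⟨j, hj⟩⟩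
  set m : Fin n → ℝ := fun i => ⨅ j : {j : Fin n // j ≠ i}, dist (V i) (V j.1) with hmdef
  have hm_nonneg : ∀ i, 0 ≤ m i := fun i => le_ciInf fun j => dist_nonneg
  have hm_le_r : ∀ i, m i ≤ r :=
    fun i => le_ciSup (f := m) (Set.Finite.bddAbove (Set.finite_range _)) i
  obtain ⟨i₀, hi₀⟩ : ∃ i, m i = ⨆ i, m i := exists_eq_ciSup_of_finite
  have hri₀ : m i₀ = r := hi₀
  -- ρ 0 i = f (m i)
  have hρ0 : ∀ i, ρ 0 i = f (m i) := by
    intro i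
    haveI : Nonempty {j : Fin n // j ≠ i} := hne i
    obtain ⟨j₀, hj₀⟩ : ∃ j₀ : {j : Fin n // j ≠ i},
        dist (V i) (V j₀.1) = ⨅ j : {j : Fin n // j ≠ i}, dist (V i) (V j.1) :=
      exists_eq_ciInf_of_finite
    have hmin : ∀ j : {j : Fin n // j ≠ i}, dist (V i) (V j₀.1) ≤ dist (V i) (V j.1) := by
      intro j
      rw [hj₀]
      exact ciInf_le (Set.Finite.bddBelow (Set.finite_range _)) j
    have hmi : m i = dist (V i) (V j₀.1) := hj₀.symm
    rw [h0 i, hmi]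
    refine le_antisymm ?_ (le_ciInf fun j => hf.monotone (hmin j))
    exact ciInf_le (Set.Finite.bddBelow (Set.finite_range _)) j₀
  -- invariants
  have key : ∀ k i, f 0 ≤ ρ k i ∧ ρ k i ≤ f r := by
    intro k
    induction k with
    | zero =>
      intro i
      rw [hρ0 i]
      exact ⟨hf0 _ (hm_nonneg i), hf.monotone (hm_le_r i)⟩
    | succ k ih =>
      intro i
      have hii : f (dist (V i) (V i)) ≤ ρ k i := by
        simpa using (ih i).1
      haveI : Nonempty {j : Fin n // f (dist (V j) (V i)) ≤ ρ k j} := ⟨⟨i, hii⟩⟩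
      rw [hstep]
      constructor
      · exact le_trans (ih i).1
          (le_ciSup (f := fun j : {j : Fin n // f (dist (V j) (V i)) ≤ ρ k j} => ρ k j.1)
            (Set.Finite.bddAbove (Set.finite_range _)) ⟨i, hii⟩)
      · exact ciSup_le fun j => (ih j.1).2
  have mono : ∀ k i, ρ k i ≤ ρ (k + 1) i := by
    intro k i
    have hii : f (dist (V i) (V i)) ≤ ρ k i := by simpa using (key k i).1
    rw [hstep]
    exact le_ciSup (f := fun j : {j : Fin n // f (dist (V j) (V i)) ≤ ρ k j} => ρ k j.1)
      (Set.Finite.bddAbove (Set.finite_range _)) ⟨i, hii⟩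
  have persist : ∀ i, ρ 0 i = f r → ∀ k, ρ k i = f r := by
    intro i h k
    induction k with
    | zero => exact h
    | succ k ih => exact le_antisymm (key (k + 1) i).2 (ih ▸ mono k i)
  -- walk claim
  have claim : ∀ {a b : Fin n} (p : G.Walk a b), ρ 0 b = f r →
      ∀ k, p.length ≤ k → ρ k a = f r := by
    intro a b p
    induction p with
    | nil => intro hb k _; exact persist _ hb k
    | @cons a c b h q ih =>
      intro hb k hk
      simp only [SimpleGraph.Walk.length_cons] at hk
      obtain ⟨k, rfl⟩ : ∃ k', k = k' + 1 := ⟨k - 1, by omega⟩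
      have hj : ρ k c = f r := ih hb k (by omega)
      have hd : dist (V c) (V a) ≤ r := by
        have h2 : dist (V a) (V c) ≤ r := h.2
        rwa [dist_comm] at h2
      have hmem : f (dist (V c) (V a)) ≤ ρ k c := by
        rw [hj]; exact hf.monotone hd
      refine le_antisymm (key (k + 1) a).2 ?_
      rw [hstep]
      calc f r = ρ k c := hj.symm
        _ ≤ _ := le_ciSup (f := fun j : {l : Fin n // f (dist (V l) (V a)) ≤ ρ k l} => ρ k j.1)
            (Set.Finite.bddAbove (Set.finite_range _)) ⟨c, hmem⟩
  intro k hk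
  have hall : ∀ i, ρ k i = f r := by
    intro i
    obtain ⟨p, hp⟩ := (hconn i₀ i).exists_walk_length_eq_dist
    refine claim p.reverse (by rw [hρ0, hri₀]) k ?_
    rw [SimpleGraph.Walk.length_reverse, hp]
    calc G.dist i₀ i ≤ ⨆ j : Fin n, G.dist i₀ j :=
          le_ciSup (f := fun j => G.dist i₀ j) (Set.Finite.bddAbove (Set.finite_range _)) i
      _ ≤ ⨆ i : Fin n, ⨆ j : Fin n, G.dist i j :=
          le_ciSup (f := fun i => ⨆ j : Fin n, G.dist i j)
            (Set.Finite.bddAbove (Set.finite_range _)) i₀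
      _ = D := hD.symm
      _ ≤ k := hk
  refine ⟨hall, ?_⟩
  intro i j
  rw [hall i]
  constructor
  · rintro ⟨hij, hle⟩
    exact ⟨hij, (hf.le_iff_le).mp hle⟩
  · rintro ⟨hij, hle⟩
    exact ⟨hij, hf.monotone hle⟩
end

section
/- Fix r > 0 and let A ⊆ ℝ² be a Lebesgue-measurable set with 0 < vol(A) < ∞. Let Ã(r) = {x ∈ A : D_r(x) ⊆ A} be the interior of A at scale r, where D_r(x) is the closed disc of radius r centered at x. For V = (V₁,…,Vₙ) drawn i.i.d. from the uniform probability measure on A, let N_r(x;V) = #{i : V_i ∈ D_r(x)}. Then for every ε > 0, limₙ→∞ ℙⁿ{V : for every x ∈ Ã(r), (n/vol(A))·(1−ε) ≤ N_r(x;V)/(π r²) ≤ (n/vol(A))·(1+ε)} = 1, where ℙⁿ is the n-fold product of the uniform probability measure on A. -/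
open Metric MeasureTheory Filter ProbabilityTheory

namespace DensityAux

variable {E : Type*} [MeasurableSpace E]

variable {E : Type*} [MeasurableSpace E]

lemma pi_eval_apply (ν : Measure E) [IsProbabilityMeasure ν] {n : ℕ} (i : Fin n) (a : Set E) :
    Measure.pi (fun _ : Fin n => ν) ((fun V : Fin n → E => V i) ⁻¹' a) = ν a := by
  classical
  rw [show (fun V : Fin n → E => V i) ⁻¹' a
      = Set.pi Set.univ (Function.update (fun _ => Set.univ) i a) from Set.eval_preimage,
    Measure.pi_pi]
  rw [← Finset.mul_prod_erase Finset.univ _ (Finset.mem_univ i), Function.update_self]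
  have h1 : ∀ k ∈ Finset.univ.erase i,
      ν (Function.update (fun _ => Set.univ) i a k) = 1 := by
    intro k hk
    rw [Function.update_of_ne (Finset.mem_erase.mp hk).1, measure_univ]
  rw [Finset.prod_congr rfl h1, Finset.prod_const_one, mul_one]

lemma indepFun_eval (ν : Measure E) [IsProbabilityMeasure ν] {n : ℕ} {i j : Fin n} (hij : i ≠ j) :
    IndepFun (fun V : Fin n → E => V i) (fun V : Fin n → E => V j)
      (Measure.pi fun _ : Fin n => ν) := by
  classical
  rw [indepFun_iff_measure_inter_preimage_eq_mul]
  intro a b _ _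
  rw [pi_eval_apply, pi_eval_apply]
  have h1 : (fun V : Fin n → E => V i) ⁻¹' a ∩ (fun V : Fin n → E => V j) ⁻¹' b
      = Set.pi Set.univ (fun k => if k = i then a else if k = j then b else Set.univ) := by
    ext V
    simp only [Set.mem_inter_iff, Set.mem_preimage, Set.mem_pi, Set.mem_univ, forall_true_left]
    constructor
    · rintro ⟨h1, h2⟩ k
      by_cases hk : k = i
      · subst hk; simpa using h1
      · by_cases hk' : k = j
        · subst hk'; simp only [if_neg hk, if_pos rfl]; exact h2
        · simp [hk, hk']
    · intro h
      constructor
      · have := h i; simpa using this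
      · have := h j; rwa [if_neg hij.symm, if_pos rfl] at this
  rw [h1, Measure.pi_pi]
  rw [← Finset.mul_prod_erase Finset.univ _ (Finset.mem_univ i),
    ← Finset.mul_prod_erase _ _ (Finset.mem_erase.mpr ⟨hij.symm, Finset.mem_univ j⟩)]
  have e1 : (if i = i then a else if i = j then b else Set.univ) = a := if_pos rfl
  have e2 : (if j = i then a else if j = j then b else Set.univ) = b := by
    rw [if_neg hij.symm, if_pos rfl]
  rw [e1, e2]
  have h2 : ∀ k ∈ (Finset.univ.erase i).erase j,
      ν (if k = i then a else if k = j then b else Set.univ) = 1 := by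
    intro k hk
    obtain ⟨hkj, hki'⟩ := Finset.mem_erase.mp hk
    obtain ⟨hki, -⟩ := Finset.mem_erase.mp hki'
    rw [if_neg hki, if_neg hkj, measure_univ]
  rw [Finset.prod_congr rfl h2, Finset.prod_const_one, mul_one]

variable {E : Type*} [MeasurableSpace E]

lemma cheb_count (ν : Measure E) [IsProbabilityMeasure ν]
    {s : Set E} (hs : MeasurableSet s) (n : ℕ) {c : ℝ} (hc : 0 < c) :
    Measure.pi (fun _ : Fin n => ν)
      {V : Fin n → E | c ≤ |(∑ i : Fin n, s.indicator (fun _ => (1:ℝ)) (V i))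
        - n * (ν s).toReal|}
      ≤ ENNReal.ofReal ((n : ℝ) / (4 * c ^ 2)) := by
  classical
  set P : Measure (Fin n → E) := Measure.pi (fun _ : Fin n => ν) with hP
  haveI : IsProbabilityMeasure P := by rw [hP]; infer_instance
  set p : ℝ := (ν s).toReal with hp
  have hp01 : 0 ≤ p ∧ p ≤ 1 := by
    constructor
    · exact ENNReal.toReal_nonneg
    · rw [hp]
      exact ENNReal.toReal_le_of_le_ofReal zero_le_one (by simpa using prob_le_one)
  set X : Fin n → (Fin n → E) → ℝ := fun i V => s.indicator (fun _ => (1:ℝ)) (V i) with hX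
  have hXmeas : ∀ i, Measurable (X i) := fun i =>
    (measurable_const.indicator hs).comp (measurable_pi_apply i)
  have hXbd : ∀ i V, ‖X i V‖ ≤ 1 := by
    intro i V
    rw [hX]
    simp only [Set.indicator_apply]
    split <;> simp
  have hXmem : ∀ i, MemLp (X i) 2 P := fun i =>
    MemLp.of_bound (hXmeas i).aestronglyMeasurable 1 (Filter.Eventually.of_forall (hXbd i))
  have hXint : ∀ i, ∫ V, X i V ∂P = p := by
    intro i
    have hmap : P.map (fun V : Fin n → E => V i) = ν := by
      apply Measure.ext
      intro t ht
      rw [Measure.map_apply (measurable_pi_apply i) ht, hP, pi_eval_apply]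
    calc ∫ V, X i V ∂P = ∫ x, s.indicator (fun _ => (1:ℝ)) x ∂(P.map (fun V => V i)) := by
          rw [integral_map (measurable_pi_apply i).aemeasurable]
          rw [hmap]
          exact (measurable_const.indicator hs).aestronglyMeasurable
      _ = p := by rw [hmap, integral_indicator_const _ hs, smul_eq_mul, mul_one]; rfl
  have hXsq : ∀ i, X i ^ 2 = X i := by
    intro i
    funext V
    simp only [Pi.pow_apply, hX, Set.indicator_apply]
    split <;> norm_num
  have hvar : ∀ i, variance (X i) P = p - p ^ 2 := by
    intro i
    rw [variance_eq_sub (hXmem i), hXsq i, hXint i]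
  set S : (Fin n → E) → ℝ := ∑ i, X i with hS
  have hSmem : MemLp S 2 P := memLp_finset_sum' _ (fun i _ => hXmem i)
  have hES : ∫ V, S V ∂P = n * p := by
    rw [hS]
    have : ∫ V, Finset.univ.sum (fun i => X i) V ∂P = ∑ i : Fin n, ∫ V, X i V ∂P := by
      simp only [Finset.sum_apply]
      exact integral_finset_sum _ (fun i _ => (hXmem i).integrable one_le_two)
    rw [this]
    simp [hXint, Finset.card_univ]
  have hVarS : variance S P = n * (p - p ^ 2) := by
    rw [hS, IndepFun.variance_sum (fun i _ => hXmem i)]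
    · simp [hvar, Finset.card_univ]; ring
    · intro i _ j _ hij
      exact (indepFun_eval ν hij).comp (measurable_const.indicator hs)
        (measurable_const.indicator hs)
  have cheb := meas_ge_le_variance_div_sq (μ := P) hSmem hc
  have hsets : {V : Fin n → E | c ≤ |(∑ i : Fin n, s.indicator (fun _ => (1:ℝ)) (V i))
      - n * (ν s).toReal|} = {ω | c ≤ |S ω - ∫ x, S x ∂P|} := by
    ext V
    rw [Set.mem_setOf_eq, Set.mem_setOf_eq, hES]
    have hSV : S V = ∑ i : Fin n, s.indicator (fun _ => (1:ℝ)) (V i) := by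
      simp [hS, hX]
    rw [hSV, hp]
  rw [hsets]
  refine le_trans cheb (ENNReal.ofReal_le_ofReal ?_)
  rw [hVarS]
  have h14 : p - p ^ 2 ≤ 1/4 := by nlinarith [sq_nonneg (p - 1/2)]
  have h1 : (n:ℝ) * (p - p ^ 2) ≤ n * (1/4) :=
    mul_le_mul_of_nonneg_left h14 (Nat.cast_nonneg n)
  rw [div_le_div_iff₀ (by positivity) (by positivity)]
  have h2 := mul_le_mul_of_nonneg_right h1 (by positivity : (0:ℝ) ≤ 4 * c ^ 2)
  nlinarith [h2]

lemma vol_cb (x : EuclideanSpace ℝ (Fin 2)) {s : ℝ} (hs : 0 ≤ s) :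
    volume (closedBall x s) = ENNReal.ofReal (Real.pi * s ^ 2) := by
  rw [EuclideanSpace.volume_closedBall]
  simp only [Fintype.card_fin]
  have h2 : ((2:ℕ):ℝ) / 2 + 1 = 2 := by norm_num
  rw [h2, Real.Gamma_two, div_one, Real.sq_sqrt Real.pi_pos.le,
    ← ENNReal.ofReal_pow hs, ← ENNReal.ofReal_mul (by positivity), mul_comm]

lemma coord_dist_le (x y : EuclideanSpace ℝ (Fin 2)) (i : Fin 2) :
    dist (x i) (y i) ≤ dist x y := by
  rw [EuclideanSpace.dist_eq]
  have h1 : dist (x i) (y i) = Real.sqrt (dist (x i) (y i) ^ 2) :=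
    (Real.sqrt_sq dist_nonneg).symm
  rw [h1]
  exact Real.sqrt_le_sqrt (Finset.single_le_sum
    (f := fun k => dist (x k) (y k) ^ 2) (fun k _ => sq_nonneg _) (Finset.mem_univ i))

lemma ncard_eq_sum {E : Type*} {n : ℕ} (V : Fin n → E) (s : Set E) :
    (({i : Fin n | V i ∈ s}).ncard : ℝ) = ∑ i : Fin n, s.indicator (fun _ => (1:ℝ)) (V i) := by
  classical
  have h1 : {i : Fin n | V i ∈ s} = ↑(Finset.univ.filter (fun i => V i ∈ s)) := by
    ext i; simp
  rw [h1, Set.ncard_coe_finset, Finset.card_filter]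
  push_cast
  refine Finset.sum_congr rfl (fun i _ => ?_)
  simp [Set.indicator_apply]

variable {E : Type*} [MeasurableSpace E]

/-- The bad event: the count of points in `s` deviates from its mean by at least `c`. -/
def badSet (ν : Measure E) (s : Set E) (c : ℝ) (n : ℕ) : Set (Fin n → E) :=
  {V | c ≤ |(∑ i : Fin n, s.indicator (fun _ => (1:ℝ)) (V i)) - n * (ν s).toReal|}

lemma badSet_measurable (ν : Measure E) {s : Set E} (hs : MeasurableSet s) (c : ℝ) (n : ℕ) :
    MeasurableSet (badSet ν s c n) := by
  have hf : Measurable (fun V : Fin n → E =>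
      |(∑ i : Fin n, s.indicator (fun _ => (1:ℝ)) (V i)) - n * (ν s).toReal|) := by
    apply Measurable.abs
    apply Measurable.sub _ measurable_const
    exact Finset.measurable_sum _ (fun i _ =>
      (measurable_const.indicator hs).comp (measurable_pi_apply i))
  exact measurableSet_le measurable_const hf

lemma badSet_meas_le (ν : Measure E) [IsProbabilityMeasure ν]
    {s : Set E} (hs : MeasurableSet s) {c : ℝ} (hc : 0 < c) (n : ℕ) :
    Measure.pi (fun _ : Fin n => ν) (badSet ν s c n)
      ≤ ENNReal.ofReal ((n : ℝ) / (4 * c ^ 2)) :=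
  cheb_count ν hs n hc

end DensityAux

open Metric MeasureTheory Filter

set_option maxHeartbeats 1000000 in
open DensityAux in
theorem density_homogeneity_whp (r : ℝ) (hr : 0 < r)
    (A : Set (EuclideanSpace ℝ (Fin 2))) (hA : MeasurableSet A)
    (hA0 : 0 < volume A) (hAfin : volume A < ⊤)
    (ε : ℝ) (hε : 0 < ε) :
    Tendsto
      (fun n : ℕ => (Measure.pi fun _ : Fin n => (volume A)⁻¹ • volume.restrict A)
        {V : Fin n → EuclideanSpace ℝ (Fin 2) |
          ∀ x ∈ {x ∈ A | closedBall x r ⊆ A},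
            ((n : ℝ) / (volume A).toReal) * (1 - ε) ≤
                (({i : Fin n | V i ∈ closedBall x r}).ncard : ℝ) / (Real.pi * r ^ 2) ∧
            (({i : Fin n | V i ∈ closedBall x r}).ncard : ℝ) / (Real.pi * r ^ 2) ≤
                ((n : ℝ) / (volume A).toReal) * (1 + ε)})
      atTop (nhds 1) := by
  classical
  set ν : Measure (EuclideanSpace ℝ (Fin 2)) := (volume A)⁻¹ • volume.restrict A with hν
  haveI hprob : IsProbabilityMeasure ν := by
    constructor
    rw [hν, Measure.smul_apply, Measure.restrict_apply MeasurableSet.univ, Set.univ_inter,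
      smul_eq_mul, ENNReal.inv_mul_cancel hA0.ne' hAfin.ne]
  set Vr : ℝ := (volume A).toReal with hVr
  have hVrpos : 0 < Vr := ENNReal.toReal_pos hA0.ne' hAfin.ne
  set δ : ℝ := r * min (1/8) (ε/8) with hδdef
  have hδpos : 0 < δ := by
    apply mul_pos hr
    apply lt_min <;> positivity
  have hδr : δ ≤ r / 8 := by
    rw [hδdef]
    calc r * min (1/8) (ε/8) ≤ r * (1/8) :=
          mul_le_mul_of_nonneg_left (min_le_left _ _) hr.le
      _ = r / 8 := by ring
  have hδε : δ ≤ r * ε / 8 := by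
    rw [hδdef]
    calc r * min (1/8) (ε/8) ≤ r * (ε/8) :=
          mul_le_mul_of_nonneg_left (min_le_right _ _) hr.le
      _ = r * ε / 8 := by ring
  set η : ℝ := Real.pi * r ^ 2 * ε / (2 * Vr) with hη
  have hηpos : 0 < η := by
    rw [hη]; positivity
  clear_value Vr δ η
  clear hδdef
  -- the net map
  set net : EuclideanSpace ℝ (Fin 2) → EuclideanSpace ℝ (Fin 2) :=
    fun x => (WithLp.toLp 2 (fun i => δ * (round (x i / δ) : ℤ)) : EuclideanSpace ℝ (Fin 2)) with hnet
  have hnet_apply : ∀ x i, net x i = δ * (round (x i / δ) : ℤ) := fun x i => rfl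
  have hnet_dist : ∀ x, dist x (net x) ≤ δ := by
    intro x
    have hcoord : ∀ i, dist (x i) (net x i) ≤ δ / 2 := by
      intro i
      rw [Real.dist_eq, hnet_apply]
      have h := abs_sub_round (x i / δ)
      have he : x i - δ * (round (x i / δ) : ℤ) = δ * (x i / δ - (round (x i / δ) : ℤ)) := by
        field_simp
      rw [he, abs_mul, abs_of_pos hδpos]
      nlinarith [abs_nonneg (x i / δ - (round (x i / δ) : ℤ))]
    have hsum : ∑ i, dist (x i) (net x i) ^ 2 ≤ δ ^ 2 := by
      rw [Fin.sum_univ_two]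
      nlinarith [hcoord 0, hcoord 1, dist_nonneg (x := x 0) (y := net x 0),
        dist_nonneg (x := x 1) (y := net x 1)]
    calc dist x (net x) = Real.sqrt (∑ i, dist (x i) (net x i) ^ 2) :=
          EuclideanSpace.dist_eq x (net x)
      _ ≤ Real.sqrt (δ ^ 2) := Real.sqrt_le_sqrt hsum
      _ = δ := Real.sqrt_sq hδpos.le
  set Atil : Set (EuclideanSpace ℝ (Fin 2)) := {x ∈ A | closedBall x r ⊆ A} with hAtil
  set L : Set (EuclideanSpace ℝ (Fin 2)) := {y | ∀ i, ∃ k : ℤ, y i = δ * (k : ℝ)} with hL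
  set Y : Set (EuclideanSpace ℝ (Fin 2)) := {y ∈ L | ∃ x ∈ Atil, dist x y ≤ δ} with hY
  -- lattice separation
  have hsep : ∀ y ∈ L, ∀ z ∈ L, y ≠ z → δ ≤ dist y z := by
    intro y hy z hz hne
    have hex : ∃ i, y i ≠ z i := by
      by_contra h
      push_neg at h
      exact hne (PiLp.ext h)
    obtain ⟨i, hi⟩ := hex
    obtain ⟨k, hk⟩ := hy i
    obtain ⟨l, hl⟩ := hz i
    have hkl : k ≠ l := by
      rintro rfl
      exact hi (hk.trans hl.symm)
    have h1 : δ ≤ dist (y i) (z i) := by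
      rw [Real.dist_eq, hk, hl, ← mul_sub, abs_mul, abs_of_pos hδpos]
      have h2 : (1:ℝ) ≤ |(k:ℝ) - (l:ℝ)| := by
        have : ((1:ℤ):ℝ) ≤ |((k - l : ℤ) : ℝ)| := by
          rw [← Int.cast_abs]
          exact_mod_cast Int.one_le_abs (sub_ne_zero.mpr hkl)
        push_cast at this
        convert this using 2
      nlinarith
    exact h1.trans (coord_dist_le y z i)
  -- Y is finite
  have hYfin : Y.Finite := by
    have hsubA : ∀ y ∈ Y, closedBall y (δ/3) ⊆ A := by
      intro y hy
      obtain ⟨hyL, x, hx, hxy⟩ := hy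
      have h1 : closedBall y (δ/3) ⊆ closedBall x r := by
        apply closedBall_subset_closedBall'
        rw [dist_comm]
        linarith [hδr]
      exact h1.trans hx.2
    have hdisj : Pairwise (Function.onFun Disjoint fun y : Y => closedBall (y : EuclideanSpace ℝ (Fin 2)) (δ/3)) := by
      intro y z hyz
      have hne : (y : EuclideanSpace ℝ (Fin 2)) ≠ z := fun h => hyz (Subtype.ext h)
      apply closedBall_disjoint_closedBall
      obtain ⟨hyL, -⟩ := y.2
      obtain ⟨hzL, -⟩ := z.2
      have := hsep _ hyL _ hzL hne
      linarith
    have hfinU : volume (⋃ y : Y, closedBall (y : EuclideanSpace ℝ (Fin 2)) (δ/3)) ≠ ⊤ := by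
      refine ((measure_mono (Set.iUnion_subset fun y : Y => hsubA y y.2)).trans_lt hAfin).ne
    have key := Measure.finite_const_le_meas_of_disjoint_iUnion (volume)
      (ε := ENNReal.ofReal (Real.pi * (δ/3) ^ 2))
      (by positivity)
      (As := fun y : Y => closedBall (y : EuclideanSpace ℝ (Fin 2)) (δ/3))
      (fun y => measurableSet_closedBall) hdisj hfinU
    have huniv : {y : Y | ENNReal.ofReal (Real.pi * (δ/3) ^ 2)
        ≤ volume (closedBall (y : EuclideanSpace ℝ (Fin 2)) (δ/3))} = Set.univ := by
      ext y
      simp [vol_cb _ (by positivity : (0:ℝ) ≤ δ/3)]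
    rw [huniv] at key
    haveI : Finite Y := Set.finite_univ_iff.mp key
    exact Y.toFinite
  set Yf : Finset (EuclideanSpace ℝ (Fin 2)) := hYfin.toFinset with hYf
  -- the good (measurable) event
  set Bad : (n : ℕ) → Set (Fin n → EuclideanSpace ℝ (Fin 2)) := fun n =>
    ⋃ y ∈ Yf, (badSet ν (closedBall y (r - δ)) (η * n) n ∪
      badSet ν (closedBall y (r + δ)) (η * n) n) with hBad
  have hBadMeas : ∀ n, MeasurableSet (Bad n) := by
    intro n
    apply Finset.measurableSet_biUnion
    intro y _
    exact (badSet_measurable ν measurableSet_closedBall _ n).union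
      (badSet_measurable ν measurableSet_closedBall _ n)
  -- probability of the bad event tends to 0
  have hBadTendsto : Tendsto (fun n => (Measure.pi fun _ : Fin n => ν) (Bad n)) atTop (nhds 0) := by
    have hc : Tendsto (fun n : ℕ => ENNReal.ofReal ((n:ℝ) / (4 * (η * n) ^ 2))) atTop (nhds 0) := by
      have h1 : Tendsto (fun n : ℕ => (n:ℝ) / (4 * (η * n) ^ 2)) atTop (nhds 0) := by
        have heq : ∀ᶠ n : ℕ in atTop,
            (1 / (4 * η ^ 2)) * (1 / n) = (n:ℝ) / (4 * (η * n) ^ 2) := by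
          filter_upwards [eventually_ge_atTop 1] with n hn
          have hn0 : (0:ℝ) < n := by exact_mod_cast hn
          field_simp
        refine Tendsto.congr' heq ?_
        have h2 := tendsto_one_div_atTop_nhds_zero_nat.const_mul (1 / (4 * η ^ 2))
        simpa using h2
      have h3 := ENNReal.tendsto_ofReal h1
      simpa using h3
    have hbound : ∀ᶠ n : ℕ in atTop, (Measure.pi fun _ : Fin n => ν) (Bad n)
        ≤ (Yf.card : ENNReal) * (2 * ENNReal.ofReal ((n:ℝ) / (4 * (η * n) ^ 2))) := by
      filter_upwards [eventually_ge_atTop 1] with n hn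
      have hn1 : (1:ℝ) ≤ n := by exact_mod_cast hn
      have hcpos : 0 < η * n := by nlinarith
      calc (Measure.pi fun _ : Fin n => ν) (Bad n)
          ≤ ∑ y ∈ Yf, (Measure.pi fun _ : Fin n => ν)
              (badSet ν (closedBall y (r - δ)) (η * n) n ∪
               badSet ν (closedBall y (r + δ)) (η * n) n) := measure_biUnion_finset_le _ _
        _ ≤ ∑ _y ∈ Yf, (2 * ENNReal.ofReal ((n:ℝ) / (4 * (η * n) ^ 2))) := by
            refine Finset.sum_le_sum fun y _ => ?_
            refine (measure_union_le _ _).trans ?_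
            rw [two_mul]
            exact add_le_add (badSet_meas_le ν measurableSet_closedBall hcpos n)
              (badSet_meas_le ν measurableSet_closedBall hcpos n)
        _ = (Yf.card : ENNReal) * (2 * ENNReal.ofReal ((n:ℝ) / (4 * (η * n) ^ 2))) := by
            rw [Finset.sum_const, nsmul_eq_mul]
    have hK : Tendsto (fun n : ℕ => (Yf.card : ENNReal)
        * (2 * ENNReal.ofReal ((n:ℝ) / (4 * (η * n) ^ 2)))) atTop (nhds 0) := by
      have h2 : Tendsto (fun n : ℕ => (2:ENNReal) * ENNReal.ofReal ((n:ℝ) / (4 * (η * n) ^ 2)))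
          atTop (nhds 0) := by
        have h4 := ENNReal.Tendsto.const_mul hc (Or.inr (by norm_num : (2:ENNReal) ≠ ⊤))
        simpa using h4
      have h5 := ENNReal.Tendsto.const_mul h2 (Or.inr (ENNReal.natCast_ne_top Yf.card))
      simpa using h5
    exact tendsto_of_tendsto_of_tendsto_of_le_of_le' tendsto_const_nhds hK
      (Eventually.of_forall fun n => zero_le) hbound
  -- deterministic part: complement of Bad is contained in the good event
  have hincl : ∀ n : ℕ, (Bad n)ᶜ ⊆
      {V : Fin n → EuclideanSpace ℝ (Fin 2) |
        ∀ x ∈ Atil,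
          ((n : ℝ) / Vr) * (1 - ε) ≤
              (({i : Fin n | V i ∈ closedBall x r}).ncard : ℝ) / (Real.pi * r ^ 2) ∧
          (({i : Fin n | V i ∈ closedBall x r}).ncard : ℝ) / (Real.pi * r ^ 2) ≤
              ((n : ℝ) / Vr) * (1 + ε)} := by
    intro n V hV x hx
    obtain ⟨hxA, hxsub⟩ := hx
    set y : EuclideanSpace ℝ (Fin 2) := net x with hy
    have hyY : y ∈ Y := ⟨fun i => ⟨round (x i / δ), rfl⟩, x, ⟨hxA, hxsub⟩, hnet_dist x⟩
    have hyf : y ∈ Yf := hYfin.mem_toFinset.mpr hyY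
    have hVnot : V ∉ (badSet ν (closedBall y (r - δ)) (η * n) n ∪
        badSet ν (closedBall y (r + δ)) (η * n) n) := by
      intro h
      exact hV (Set.mem_biUnion hyf h)
    rw [Set.mem_union, not_or] at hVnot
    obtain ⟨hBm, hBp⟩ := hVnot
    simp only [badSet, Set.mem_setOf_eq, not_le] at hBm hBp
    have hdxy : dist x y ≤ δ := hnet_dist x
    have hsub1 : closedBall y (r - δ) ⊆ closedBall x r := by
      apply closedBall_subset_closedBall'
      rw [dist_comm]; linarith
    have hsub2 : closedBall x r ⊆ closedBall y (r + δ) := by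
      apply closedBall_subset_closedBall'; linarith
    have hpm : (ν (closedBall y (r - δ))).toReal = Real.pi * (r - δ) ^ 2 / Vr := by
      rw [hν, Measure.smul_apply, Measure.restrict_apply measurableSet_closedBall,
        Set.inter_eq_self_of_subset_left (hsub1.trans hxsub),
        vol_cb _ (by linarith : (0:ℝ) ≤ r - δ), smul_eq_mul,
        ENNReal.toReal_mul, ENNReal.toReal_inv, ENNReal.toReal_ofReal (by positivity), ← hVr]
      ring
    have hpp : (ν (closedBall y (r + δ))).toReal ≤ Real.pi * (r + δ) ^ 2 / Vr := by
      have hle : ν (closedBall y (r + δ))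
          ≤ (volume A)⁻¹ * ENNReal.ofReal (Real.pi * (r + δ) ^ 2) := by
        rw [hν, Measure.smul_apply, smul_eq_mul,
          Measure.restrict_apply measurableSet_closedBall]
        refine mul_le_mul_right ?_ _
        exact (measure_mono Set.inter_subset_left).trans_eq (vol_cb _ (by linarith))
      have hfin2 : (volume A)⁻¹ * ENNReal.ofReal (Real.pi * (r + δ) ^ 2) ≠ ⊤ :=
        ENNReal.mul_ne_top (ENNReal.inv_ne_top.mpr hA0.ne') ENNReal.ofReal_ne_top
      refine (ENNReal.toReal_mono hfin2 hle).trans_eq ?_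
      rw [ENNReal.toReal_mul, ENNReal.toReal_inv, ENNReal.toReal_ofReal (by positivity), ← hVr]
      ring
    have hcnt := ncard_eq_sum V (closedBall x r)
    have hmono1 : (∑ i : Fin n, (closedBall y (r - δ)).indicator (fun _ => (1:ℝ)) (V i))
        ≤ ∑ i : Fin n, (closedBall x r).indicator (fun _ => (1:ℝ)) (V i) :=
      Finset.sum_le_sum fun i _ =>
        Set.indicator_le_indicator_of_subset hsub1 (fun _ => zero_le_one) _
    have hmono2 : (∑ i : Fin n, (closedBall x r).indicator (fun _ => (1:ℝ)) (V i))
        ≤ ∑ i : Fin n, (closedBall y (r + δ)).indicator (fun _ => (1:ℝ)) (V i) :=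
      Finset.sum_le_sum fun i _ =>
        Set.indicator_le_indicator_of_subset hsub2 (fun _ => zero_le_one) _
    have habs1 := abs_lt.mp hBm
    have habs2 := abs_lt.mp hBp
    have hπ : (0:ℝ) < Real.pi * r ^ 2 := by positivity
    have hηeq : η * n = (n:ℝ) / Vr * (Real.pi * r ^ 2 * ε / 2) := by
      rw [hη]
      field_simp
    have hrδ : r * δ ≤ r * (r * ε / 8) := mul_le_mul_of_nonneg_left hδε hr.le
    constructor
    · rw [hcnt, le_div_iff₀ hπ]
      have hA1 : 2 * r * δ - δ ^ 2 ≤ r ^ 2 * ε / 2 := by nlinarith [sq_nonneg δ]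
      have hcore : Real.pi * r ^ 2 * (1 - ε) + Real.pi * r ^ 2 * ε / 2
          ≤ Real.pi * (r - δ) ^ 2 := by
        nlinarith [mul_le_mul_of_nonneg_left hA1 Real.pi_pos.le]
      have h3 : (n:ℝ) / Vr * (Real.pi * r ^ 2 * (1 - ε) + Real.pi * r ^ 2 * ε / 2)
          ≤ (n:ℝ) / Vr * (Real.pi * (r - δ) ^ 2) :=
        mul_le_mul_of_nonneg_left hcore (by positivity)
      have h4 : (n:ℝ) * (Real.pi * (r - δ) ^ 2 / Vr) - η * n
          ≤ ∑ i : Fin n, (closedBall x r).indicator (fun _ => (1:ℝ)) (V i) := by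
        rw [← hpm]
        linarith [habs1.1, hmono1]
      have h5 : (n:ℝ) * (Real.pi * (r - δ) ^ 2 / Vr)
          = (n:ℝ) / Vr * (Real.pi * (r - δ) ^ 2) := by ring
      linarith [h3, h4]
    · rw [hcnt, div_le_iff₀ hπ]
      have hδδ : δ * δ ≤ (r / 8) * (r * ε / 8) :=
        mul_le_mul hδr hδε hδpos.le (by positivity)
      have hA2 : 2 * r * δ + δ ^ 2 ≤ r ^ 2 * ε / 2 := by nlinarith
      have hcore2 : Real.pi * (r + δ) ^ 2 + Real.pi * r ^ 2 * ε / 2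
          ≤ Real.pi * r ^ 2 * (1 + ε) := by
        nlinarith [mul_le_mul_of_nonneg_left hA2 Real.pi_pos.le]
      have h3 : (n:ℝ) / Vr * (Real.pi * (r + δ) ^ 2 + Real.pi * r ^ 2 * ε / 2)
          ≤ (n:ℝ) / Vr * (Real.pi * r ^ 2 * (1 + ε)) :=
        mul_le_mul_of_nonneg_left hcore2 (by positivity)
      have h4 : (∑ i : Fin n, (closedBall x r).indicator (fun _ => (1:ℝ)) (V i))
          ≤ (n:ℝ) * (Real.pi * (r + δ) ^ 2 / Vr) + η * n := by
        have h6 : (n:ℝ) * (ν (closedBall y (r + δ))).toReal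
            ≤ (n:ℝ) * (Real.pi * (r + δ) ^ 2 / Vr) :=
          mul_le_mul_of_nonneg_left hpp (Nat.cast_nonneg n)
        linarith [habs2.2, hmono2]
      have h5 : (n:ℝ) * (Real.pi * (r + δ) ^ 2 / Vr)
          = (n:ℝ) / Vr * (Real.pi * (r + δ) ^ 2) := by ring
      linarith [h3, h4]
  -- assemble
  have hcompl : ∀ n : ℕ, (Measure.pi fun _ : Fin n => ν) ((Bad n)ᶜ)
      = 1 - (Measure.pi fun _ : Fin n => ν) (Bad n) := by
    intro n
    haveI : IsProbabilityMeasure (Measure.pi fun _ : Fin n => ν) := by infer_instance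
    exact prob_compl_eq_one_sub (hBadMeas n)
  have hlow : Tendsto (fun n => (Measure.pi fun _ : Fin n => ν) ((Bad n)ᶜ)) atTop (nhds 1) := by
    simp only [hcompl]
    have := ENNReal.Tendsto.sub (tendsto_const_nhds (x := (1 : ENNReal)) (f := atTop))
      hBadTendsto (Or.inl ENNReal.one_ne_top)
    simpa using this
  refine tendsto_of_tendsto_of_tendsto_of_le_of_le hlow tendsto_const_nhds
    (fun n => measure_mono (hincl n)) (fun n => prob_le_one)
end
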